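/- If a univariate complex polynomial q of degree N has a root z with q'(z) ≠ 0, then for every ε > 0 there is δ > 0 such that every polynomial q̃ of degree ≤ N with all coefficients within δ of those of q has a root within ε of z (simple roots are stable under coefficient perturbation). -/

import Mathlib

open Polynomial

/-- Simple roots are stable under coefficient perturbation. -/
theorem stmt_11 (N : ℕ) (q : Polynomial ℂ) (hq : q.degree = N)
    (z : ℂ) (hz : q.eval z = 0) (hz' : q.derivative.eval z ≠ 0) :
    ∀ ε > (0 : ℝ), ∃ δ > (0 : ℝ), ∀ q' : Polynomial ℂ,
      q'.degree ≤ N →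
      (∀ i ≤ N, ‖q'.coeff i - q.coeff i‖ < δ) →
      ∃ z' : ℂ, q'.eval z' = 0 ∧ ‖z' - z‖ < ε := by
  intro ε hε
  set n := N + 1 with hn
  set A := q.derivative.eval z with hA
  -- the map h : (Fin n → ℂ) × ℂ → E
  set g : (Fin n → ℂ) × ℂ → ℂ := fun p => q.eval p.2 + ∑ i : Fin n, p.1 i * p.2 ^ (i : ℕ) with hgdef
  set h : (Fin n → ℂ) × ℂ → (Fin n → ℂ) × ℂ := fun p => (p.1, g p) with hhdef
  set x₀ : (Fin n → ℂ) × ℂ := (0, z) with hx₀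
  -- derivative pieces
  have hproj : ∀ i : Fin n, HasStrictFDerivAt (fun p : (Fin n → ℂ) × ℂ => p.1 i)
      ((ContinuousLinearMap.proj i).comp (ContinuousLinearMap.fst ℂ (Fin n → ℂ) ℂ)) x₀ :=
    fun i => ((ContinuousLinearMap.proj i).comp
      (ContinuousLinearMap.fst ℂ (Fin n → ℂ) ℂ)).hasStrictFDerivAt
  have hpow : ∀ i : Fin n, HasStrictFDerivAt (fun p : (Fin n → ℂ) × ℂ => p.2 ^ (i : ℕ))
      ((((i : ℕ) : ℂ) * z ^ ((i : ℕ) - 1)) • ContinuousLinearMap.snd ℂ (Fin n → ℂ) ℂ) x₀ :=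
    fun i => (hasStrictDerivAt_pow (i : ℕ) z).comp_hasStrictFDerivAt x₀ hasStrictFDerivAt_snd
  have hq1 : HasStrictFDerivAt (fun p : (Fin n → ℂ) × ℂ => q.eval p.2)
      (A • ContinuousLinearMap.snd ℂ (Fin n → ℂ) ℂ) x₀ :=
    (q.hasStrictDerivAt z).comp_hasStrictFDerivAt (f := Prod.snd) x₀
      (hasStrictFDerivAt_snd (𝕜 := ℂ) (E := Fin n → ℂ) (F := ℂ) (p := x₀))
  have hsum : HasStrictFDerivAt (fun p : (Fin n → ℂ) × ℂ => ∑ i : Fin n, p.1 i * p.2 ^ (i : ℕ))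
      (∑ i : Fin n, ((0 : Fin n → ℂ) i •
          ((((i : ℕ) : ℂ) * z ^ ((i : ℕ) - 1)) • ContinuousLinearMap.snd ℂ (Fin n → ℂ) ℂ)
        + z ^ (i : ℕ) • ((ContinuousLinearMap.proj i).comp
            (ContinuousLinearMap.fst ℂ (Fin n → ℂ) ℂ)))) x₀ :=
    HasStrictFDerivAt.fun_sum (fun i _ => (hproj i).fun_mul (hpow i))
  have hg : HasStrictFDerivAt g
      (A • ContinuousLinearMap.snd ℂ (Fin n → ℂ) ℂ
        + ∑ i : Fin n, ((0 : Fin n → ℂ) i •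
          ((((i : ℕ) : ℂ) * z ^ ((i : ℕ) - 1)) • ContinuousLinearMap.snd ℂ (Fin n → ℂ) ℂ)
        + z ^ (i : ℕ) • ((ContinuousLinearMap.proj i).comp
            (ContinuousLinearMap.fst ℂ (Fin n → ℂ) ℂ)))) x₀ := hq1.add hsum
  set L : (Fin n → ℂ) × ℂ →L[ℂ] (Fin n → ℂ) × ℂ := (ContinuousLinearMap.fst ℂ (Fin n → ℂ) ℂ).prod
      (A • ContinuousLinearMap.snd ℂ (Fin n → ℂ) ℂ
        + ∑ i : Fin n, ((0 : Fin n → ℂ) i •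
          ((((i : ℕ) : ℂ) * z ^ ((i : ℕ) - 1)) • ContinuousLinearMap.snd ℂ (Fin n → ℂ) ℂ)
        + z ^ (i : ℕ) • ((ContinuousLinearMap.proj i).comp
            (ContinuousLinearMap.fst ℂ (Fin n → ℂ) ℂ)))) with hLdef
  have hh : HasStrictFDerivAt h L x₀ := HasStrictFDerivAt.prodMk hasStrictFDerivAt_fst hg
  have happly : ∀ v : (Fin n → ℂ) × ℂ, L v = (v.1, A * v.2 + ∑ i : Fin n, z ^ (i : ℕ) * v.1 i) := by
    intro v
    simp [hLdef, ContinuousLinearMap.prod_apply, ContinuousLinearMap.add_apply,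
      ContinuousLinearMap.smul_apply, ContinuousLinearMap.sum_apply,
      ContinuousLinearMap.coe_comp', Function.comp_apply, ContinuousLinearMap.proj_apply,
      ContinuousLinearMap.coe_fst', ContinuousLinearMap.coe_snd', smul_eq_mul,
      Pi.zero_apply, zero_mul, zero_add, zero_smul, mul_comm]
  -- L is bijective
  have hinj : Function.Injective L := by
    intro v w hvw
    have h2 : ((v.1, A * v.2 + ∑ i : Fin n, z ^ (i : ℕ) * v.1 i) : (Fin n → ℂ) × ℂ)
        = (w.1, A * w.2 + ∑ i : Fin n, z ^ (i : ℕ) * w.1 i) := by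
      rw [← happly v, ← happly w, hvw]
    rw [Prod.mk.injEq] at h2
    obtain ⟨e1, e2⟩ := h2
    rw [e1] at e2
    have hA2 : A * v.2 = A * w.2 := by linear_combination e2
    exact Prod.ext e1 (mul_left_cancel₀ hz' hA2)
  have hbij : Function.Bijective L :=
    ⟨hinj, (LinearMap.injective_iff_surjective (f := (L : (Fin n → ℂ) × ℂ →ₗ[ℂ] (Fin n → ℂ) × ℂ))).mp hinj⟩
  set e : ((Fin n → ℂ) × ℂ) ≃L[ℂ] (Fin n → ℂ) × ℂ :=
    (LinearEquiv.ofBijective (L : (Fin n → ℂ) × ℂ →ₗ[ℂ] (Fin n → ℂ) × ℂ) hbij).toContinuousLinearEquiv with hedef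
  have hcoe : (e : (Fin n → ℂ) × ℂ →L[ℂ] (Fin n → ℂ) × ℂ) = L := by ext v <;> rfl
  have hh' : HasStrictFDerivAt h (e : (Fin n → ℂ) × ℂ →L[ℂ] (Fin n → ℂ) × ℂ) x₀ := by rw [hcoe]; exact hh
  -- inverse function theorem
  have hx₀im : h x₀ = (0, 0) := by
    simp [hhdef, hgdef, hx₀, hz]
  have hright := hh'.eventually_right_inverse
  have htend := hh'.localInverse_tendsto
  set φ := hh'.localInverse h e x₀ with hφdef
  have hev : ∀ᶠ y in nhds (h x₀), h (φ y) = y ∧ dist (φ y) x₀ < ε := by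
    filter_upwards [hright, htend (Metric.ball_mem_nhds x₀ hε)] with y h1 h2
    exact ⟨h1, h2⟩
  rw [Metric.eventually_nhds_iff] at hev
  obtain ⟨δ, hδ, hδball⟩ := hev
  refine ⟨δ, hδ, fun q' hq'deg hq'coeff => ?_⟩
  -- build the perturbation vector
  set c : Fin n → ℂ := fun i => q'.coeff i - q.coeff i with hcdef
  have hcnorm : ‖c‖ < δ := by
    rw [pi_norm_lt_iff hδ]
    intro i
    simpa [hcdef] using hq'coeff i (Nat.lt_succ_iff.mp i.isLt)
  have hydist : dist ((c, (0 : ℂ)) : (Fin n → ℂ) × ℂ) (h x₀) < δ := by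
    rw [hx₀im, Prod.dist_eq]
    simp only [dist_zero_right, norm_zero]
    exact max_lt hcnorm hδ
  obtain ⟨h1, h2⟩ := hδball hydist
  -- unpack
  set w : ℂ := (φ ((c, 0) : (Fin n → ℂ) × ℂ)).2 with hwdef
  have hfst : (φ ((c, 0) : (Fin n → ℂ) × ℂ)).1 = c := by
    have := congrArg Prod.fst h1
    simpa [hhdef] using this
  have hgz : g (φ ((c, 0) : (Fin n → ℂ) × ℂ)) = 0 := by
    have := congrArg Prod.snd h1
    simpa [hhdef] using this
  -- evaluate g
  have hqnd : q.natDegree < n := by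
    have : q.natDegree = N := natDegree_eq_of_degree_eq_some hq
    omega
  have hq'nd : q'.natDegree < n := by
    have : q'.natDegree ≤ N := natDegree_le_iff_degree_le.mpr hq'deg
    omega
  have heval : q'.eval w = 0 := by
    have hg2 : q.eval w + ∑ i : Fin n, c i * w ^ (i : ℕ) = 0 := by
      rw [← hgz]
      simp only [hgdef]
      rw [hfst]
    rw [eval_eq_sum_range' hq'nd]
    rw [eval_eq_sum_range' hqnd, ← Fin.sum_univ_eq_sum_range (fun i => q.coeff i * w ^ i) n] at hg2
    rw [← Fin.sum_univ_eq_sum_range (fun i => q'.coeff i * w ^ i) n]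
    rw [← hg2, ← Finset.sum_add_distrib]
    apply Finset.sum_congr rfl
    intro i _
    simp [hcdef]
    ring
  refine ⟨w, heval, ?_⟩
  rw [← Complex.dist_eq]
  calc dist w z ≤ dist (φ ((c, 0) : (Fin n → ℂ) × ℂ)) x₀ := by
        rw [Prod.dist_eq]; exact le_max_right _ _
    _ < ε := h2
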